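/- arXiv:2010.05376 — 4 statements merged into one kernel-verified Lean document; each statement's English description precedes it below -/
import Mathlib

section
/- Let F and C be nonempty compact convex subsets of finite-dimensional real vector spaces and V : F × C → ℝ bilinear. If f* ∈ F attains max_{f∈F} min_{p∈C} V(f,p), then there exists p* ∈ C such that f* ∈ argmax_{f∈F} V(f,p*); that is, every maxmin-optimal f* is a best response to some p* in C. -/
open Finset in
private lemma phi_eq_sum {n : Type*} [Fintype n] [DecidableEq n]
    (φ : (n → ℝ) →L[ℝ] ℝ) (y : n → ℝ) :
    φ y = ∑ i, y i * φ (Pi.single i 1) := by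
  have hy : y = ∑ i, y i • (Pi.single i 1 : n → ℝ) := by
    funext j
    simp [Finset.sum_apply, Pi.single_apply, Finset.sum_ite_eq']
  conv_lhs => rw [hy]
  simp [map_sum, smul_eq_mul]

/-- Every maxmin-optimal `f*` is a best response to some `p* ∈ C`. -/
theorem stmt_1 {E E' : Type*}
    [NormedAddCommGroup E] [NormedSpace ℝ E] [FiniteDimensional ℝ E]
    [NormedAddCommGroup E'] [NormedSpace ℝ E'] [FiniteDimensional ℝ E']
    (F : Set E) (C : Set E')
    (hFne : F.Nonempty) (hFcp : IsCompact F) (hFcv : Convex ℝ F)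
    (hCne : C.Nonempty) (hCcp : IsCompact C) (hCcv : Convex ℝ C)
    (V : E →ₗ[ℝ] E' →ₗ[ℝ] ℝ)
    (fstar : E) (hfF : fstar ∈ F)
    (hopt : ∀ f ∈ F, sInf ((fun p => V f p) '' C) ≤ sInf ((fun p => V fstar p) '' C)) :
    ∃ pstar ∈ C, ∀ f ∈ F, V f pstar ≤ V fstar pstar := by
  classical
  set v : ℝ := sInf ((fun p => V fstar p) '' C) with hv
  -- Main claim: some p ∈ C satisfies V f p ≤ v for all f ∈ F.
  have hmain : ∃ p ∈ C, ∀ f ∈ F, V f p ≤ v := by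
    by_contra hcon
    push_neg at hcon
    have hempty : C ∩ ⋂ f : {f : E // f ∈ F}, {p | V f.1 p ≤ v} = ∅ := by
      rw [Set.eq_empty_iff_forall_notMem]
      rintro p ⟨hpC, hp⟩
      rw [Set.mem_iInter] at hp
      obtain ⟨f, hfmem, hfv⟩ := hcon p hpC
      exact absurd (hp ⟨f, hfmem⟩) (not_le.2 hfv)
    obtain ⟨u, hu⟩ := hCcp.elim_finite_subfamily_closed
      (fun f : {f : E // f ∈ F} => {p | V f.1 p ≤ v})
      (fun f => isClosed_le (V f.1).continuous_of_finiteDimensional continuous_const) hempty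
    -- separation in ↥u → ℝ
    set L : E' →ₗ[ℝ] (↥u → ℝ) := LinearMap.pi (fun i : ↥u => V i.1.1) with hL
    set T : Set (↥u → ℝ) := L '' C with hT
    set O : Set (↥u → ℝ) := ⋂ i : ↥u, {y | y i ≤ v} with hO
    have hOcl : IsClosed O :=
      isClosed_iInter fun i => isClosed_le (continuous_apply i) continuous_const
    have hOcv : Convex ℝ O :=
      convex_iInter fun i => convex_halfSpace_le ⟨fun a b => rfl, fun c a => rfl⟩ v
    have hTcp : IsCompact T := hCcp.image L.continuous_of_finiteDimensional
    have hTcv : Convex ℝ T := hCcv.linear_image L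
    have hdisj : Disjoint O T := by
      rw [Set.disjoint_right]
      rintro y ⟨p, hpC, rfl⟩ hyO
      rw [hO, Set.mem_iInter] at hyO
      have : p ∈ C ∩ ⋂ f ∈ u, {q | V f.1 q ≤ v} := by
        refine ⟨hpC, Set.mem_iInter₂.2 fun f hf => ?_⟩
        exact hyO ⟨f, hf⟩
      rw [hu] at this
      exact this
    obtain ⟨φ, a, b, hφO, hab, hφT⟩ :=
      geometric_hahn_banach_closed_compact hOcv hOcl hTcv hTcp hdisj
    set lam : ↥u → ℝ := fun i => φ (Pi.single i 1) with hlam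
    have hlam' : ∀ i, lam i = φ (Pi.single i 1) := fun i => rfl
    have hz₀ : (Function.const ↥u v : ↥u → ℝ) ∈ O := by
      rw [hO, Set.mem_iInter]; intro i; exact le_refl v
    have hz₀a : φ (Function.const ↥u v) < a := hφO _ hz₀
    -- nonnegativity of lam
    have hlamnn : ∀ i, 0 ≤ lam i := by
      intro i
      by_contra hneg
      push_neg at hneg
      have hdivpos : 0 < (φ (Function.const ↥u v) - a) / lam i :=
        div_pos_of_neg_of_neg (by linarith) hneg
      set t : ℝ := (φ (Function.const ↥u v) - a) / lam i + 1 with ht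
      have htpos : 0 < t := by rw [ht]; linarith
      have hmem : Function.const ↥u v - t • (Pi.single i 1 : ↥u → ℝ) ∈ O := by
        rw [hO, Set.mem_iInter]
        intro j
        simp only [Set.mem_setOf_eq, Pi.sub_apply, Pi.smul_apply, Function.const_apply,
          smul_eq_mul, Pi.single_apply]
        have : 0 ≤ t * (if j = i then (1:ℝ) else 0) := by positivity
        linarith
      have hlt := hφO _ hmem
      rw [map_sub, map_smul] at hlt
      simp only [smul_eq_mul] at hlt
      have htlam : t * φ (Pi.single i 1) = (φ (Function.const ↥u v) - a) + lam i := by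
        rw [ht, add_mul, one_mul, ← hlam' i, div_mul_cancel₀ _ (ne_of_lt hneg)]
      rw [htlam] at hlt
      linarith
    set s : ℝ := ∑ i, lam i with hs
    have hsnn : 0 ≤ s := Finset.sum_nonneg fun i _ => hlamnn i
    have hφz₀ : φ (Function.const ↥u v) = v * s := by
      rw [phi_eq_sum φ, hs, Finset.mul_sum]
      exact Finset.sum_congr rfl fun i _ => rfl
    have hφL : ∀ p, φ (L p) = ∑ i : ↥u, V i.1.1 p * lam i := by
      intro p
      rw [phi_eq_sum φ]
      rfl
    obtain ⟨p₀, hp₀⟩ := hCne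
    have hbp₀ : b < φ (L p₀) := hφT _ ⟨p₀, hp₀, rfl⟩
    have hspos : 0 < s := by
      rcases hsnn.lt_or_eq with h | h
      · exact h
      · exfalso
        have hall : ∀ i ∈ Finset.univ, lam i = 0 :=
          (Finset.sum_eq_zero_iff_of_nonneg fun i _ => hlamnn i).1 h.symm
        have h1 : φ (L p₀) = 0 := by
          rw [hφL]
          exact Finset.sum_eq_zero fun i _ => by rw [hall i (Finset.mem_univ i), mul_zero]
        have h2 : φ (Function.const ↥u v) = 0 := by rw [hφz₀, ← h, mul_zero]
        linarith
    -- the convex combination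
    set fbar : E := ∑ i : ↥u, (lam i / s) • (i.1.1 : E) with hfbar
    have hfbarF : fbar ∈ F := by
      apply hFcv.sum_mem (fun i _ => div_nonneg (hlamnn i) hsnn)
      · rw [← Finset.sum_div, ← hs, div_self (ne_of_gt hspos)]
      · exact fun i _ => i.1.2
    have hVfbar : ∀ p, V fbar p = φ (L p) / s := by
      intro p
      rw [hfbar, map_sum, LinearMap.sum_apply, hφL, Finset.sum_div]
      refine Finset.sum_congr rfl fun i _ => ?_
      rw [map_smul, LinearMap.smul_apply, smul_eq_mul]
      ring
    have hlb : b / s ≤ sInf ((fun p => V fbar p) '' C) := by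
      apply le_csInf (Set.Nonempty.image _ ⟨p₀, hp₀⟩)
      rintro x ⟨p, hpC, rfl⟩
      show b / s ≤ V fbar p
      rw [hVfbar p]
      have := hφT _ ⟨p, hpC, rfl⟩
      exact le_of_lt (by gcongr)
    have hvlt : v < b / s := by
      rw [lt_div_iff₀ hspos]
      nlinarith
    have := hopt fbar hfbarF
    linarith
  obtain ⟨pstar, hpC, hp⟩ := hmain
  refine ⟨pstar, hpC, fun f hf => ?_⟩
  have h2 : v ≤ V fstar pstar := by
    apply csInf_le ((hCcp.image (V fstar).continuous_of_finiteDimensional).bddBelow)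
    exact ⟨pstar, hpC, rfl⟩
  exact le_trans (hp f hf) h2
end

section
/- In the finite persuasion setting (Ω, M, A finite, p₀ full-support, payoffs u_R, u_S), define BP = sup over kernels π : Ω → Δ(M) of max{ V_S(π,f) : f maximizes V_R(π,·) } (sender-preferred tie-breaking), and AP = sup over nonempty compact convex sets Π of kernels of max{ min_{π'∈Π} V_S(π',f) : f maximizes min_{π'∈Π} V_R(π',·) }. Then AP = BP. -/
/-!
Let `P` be a compact convex set of kernels and `f` a plan maximising the receiver's worst-case
payoff over `P`. Choose `π₁ ∈ P` minimising the receiver's Bayesian value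
`π ↦ max_g V_R(π, g)` (a maximum over pure plans `g`), and let `w` be the minimum. Separating
the convex set of pure-plan payoff vectors of `P` from the open orthant below `w` gives the
minimax inequality: some mixed plan earns at least `w` against every `π ∈ P`. Hence so does
`f`, which is therefore a Bayesian best response to `π₁`, and the sender's value `V_S(π₁, f)`
is at least her worst-case value over `P`. So every ambiguous value is dominated by a Bayesian
one; the converse inequality is witnessed by singletons `{π}`.
-/

open Finset

/-- A probabilistic information structure (stochastic kernel): for each state `ω`,
`π ω` is a probability distribution over messages. -/
def IsKernel {Ω M : Type*} [Fintype M] (π : Ω → M → ℝ) : Prop :=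
  (∀ ω m, 0 ≤ π ω m) ∧ ∀ ω, ∑ m, π ω m = 1

/-- A contingent plan: for each message `m`, `f m` is a probability distribution
over actions. -/
def IsPlan {M A : Type*} [Fintype A] (f : M → A → ℝ) : Prop :=
  (∀ m a, 0 ≤ f m a) ∧ ∀ m, ∑ a, f m a = 1

/-- Ex-ante expected payoff `V u (π, f) = Σ_{m,a,ω} f(m)(a) u(a,ω) π(m|ω) p₀(ω)`. -/
def V {Ω M A : Type*} [Fintype Ω] [Fintype M] [Fintype A]
    (p₀ : Ω → ℝ) (u : A → Ω → ℝ) (π : Ω → M → ℝ) (f : M → A → ℝ) : ℝ :=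
  ∑ m, ∑ a, ∑ ω, f m a * u a ω * π ω m * p₀ ω


section Minimax

variable {ι : Type*} [Fintype ι]

theorem nonneg_and_mul_sum_le_of_sum_mul_lt {c : ι → ℝ} {w u : ℝ}
    (h : ∀ z : ι → ℝ, (∀ i, z i < w) → ∑ i, c i * z i < u) :
    (∀ i, 0 ≤ c i) ∧ w * ∑ i, c i ≤ u := by
  classical
  have hconst : ∀ t < w, t * ∑ i, c i < u := fun t ht => by
    simpa [Finset.mul_sum, mul_comm] using h (fun _ => t) fun _ => ht
  have hnonneg : ∀ i, 0 ≤ c i := by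
    intro i
    by_contra! hi
    -- lowering coordinate `i` by `t ≥ 0` raises the sum by `t * -c i`; this `t` makes it reach `u`
    set t := (u - (w - 1) * ∑ j, c j) / -c i
    have ht : 0 ≤ t := div_nonneg (by linarith [hconst (w - 1) (by linarith)]) (by linarith)
    have hlt := h (fun j => w - 1 - if j = i then t else 0) fun j => by split_ifs <;> linarith
    simp only [mul_sub, Finset.sum_sub_distrib, mul_ite, mul_zero, Finset.sum_ite_eq',
      Finset.mem_univ, if_true, ← Finset.sum_mul] at hlt
    have : c i * t = -(u - (w - 1) * ∑ j, c j) := by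
      rw [mul_comm, ← neg_neg (c i), mul_neg, div_mul_cancel₀ _ (by linarith)]
    linarith
  refine ⟨hnonneg, le_of_forall_lt fun s hs => ?_⟩
  rcases (Finset.sum_nonneg fun i _ => hnonneg i).eq_or_lt with h0 | hpos
  · have := hconst (w - 1) (by linarith)
    rw [← h0, mul_zero] at hs this
    linarith
  · simpa [div_mul_cancel₀ _ hpos.ne'] using
      hconst (s / ∑ i, c i) ((div_lt_iff₀ hpos).2 hs)

theorem exists_mem_stdSimplex_forall_le_sum_mul {K : Set (ι → ℝ)} (hK : Convex ℝ K)
    (hKne : K.Nonempty) {w : ℝ} (h : ∀ z ∈ K, ∃ i, w ≤ z i) :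
    ∃ c ∈ stdSimplex ℝ ι, ∀ z ∈ K, w ≤ ∑ i, c i * z i := by
  classical
  have hdisj : Disjoint (Set.univ.pi fun _ => Set.Iio w) K :=
    Set.disjoint_left.2 fun z hz hzK => by
      obtain ⟨i, hi⟩ := h z hzK
      exact hi.not_gt (hz i (Set.mem_univ i))
  obtain ⟨L, u, hLs, hLK⟩ := geometric_hahn_banach_open (convex_pi fun _ _ => convex_Iio w)
    (isOpen_set_pi Set.finite_univ fun _ _ => isOpen_Iio) hK hdisj
  set c : ι → ℝ := fun i => L fun j => if i = j then 1 else 0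
  have hL : ∀ z, L z = ∑ i, c i * z i := fun z => by
    simpa [mul_comm] using LinearMap.pi_apply_eq_sum_univ L.toLinearMap z
  obtain ⟨hc, hwu⟩ := nonneg_and_mul_sum_le_of_sum_mul_lt (c := c) (w := w) (u := u)
    fun z hz => hL z ▸ hLs z fun i _ => hz i
  have hpos : 0 < ∑ i, c i := by
    refine (Finset.sum_nonneg fun i _ => hc i).lt_of_ne fun h0 => ?_
    have hc0 : c = 0 := funext fun i =>
      (Finset.sum_eq_zero_iff_of_nonneg fun j _ => hc j).1 h0.symm i (Finset.mem_univ i)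
    obtain ⟨z₀, hz₀⟩ := hKne
    have h1 := hLK z₀ hz₀
    have h2 := hLs (fun _ => w - 1) fun _ _ => show w - 1 < w by linarith
    simp only [hL, hc0, Pi.zero_apply, zero_mul, Finset.sum_const_zero] at h1 h2
    linarith
  refine ⟨fun i => c i / ∑ j, c j,
    ⟨fun i => div_nonneg (hc i) hpos.le, by rw [← Finset.sum_div, div_self hpos.ne']⟩,
    fun z hz => ?_⟩
  simp only [div_mul_eq_mul_div, ← Finset.sum_div]
  rw [le_div_iff₀ hpos, ← hL]
  exact hwu.trans (hLK z hz)

end Minimax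

section Payoff

variable {Ω M A : Type*} [Fintype Ω] [Fintype M] [Fintype A] (p₀ : Ω → ℝ) (u : A → Ω → ℝ)

/-- The posterior expected payoff of `a` after `m`, times the probability of `m`. -/
def messageValue (π : Ω → M → ℝ) (m : M) (a : A) : ℝ :=
  ∑ ω, u a ω * π ω m * p₀ ω

theorem V_eq_sum_messageValue (π : Ω → M → ℝ) (f : M → A → ℝ) :
    V p₀ u π f = ∑ m, ∑ a, f m a * messageValue p₀ u π m a := by
  simp only [V, messageValue, Finset.mul_sum, mul_assoc]

def VLinearMap (f : M → A → ℝ) : (Ω → M → ℝ) →ₗ[ℝ] ℝ where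
  toFun π := V p₀ u π f
  map_add' π π' := by
    simp only [V, Pi.add_apply, mul_add, add_mul, Finset.sum_add_distrib]
  map_smul' c π := by
    simp only [V, Pi.smul_apply, smul_eq_mul, RingHom.id_apply, Finset.mul_sum]
    exact Finset.sum_congr rfl fun _ _ => Finset.sum_congr rfl fun _ _ =>
      Finset.sum_congr rfl fun _ _ => by ring

theorem continuous_V (f : M → A → ℝ) : Continuous fun π : Ω → M → ℝ => V p₀ u π f :=
  (VLinearMap p₀ u f).continuous_of_finiteDimensional

variable [DecidableEq A]

def purePlan (g : M → A) : M → A → ℝ := fun m => Pi.single (g m) 1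

theorem V_purePlan (π : Ω → M → ℝ) (g : M → A) :
    V p₀ u π (purePlan g) = ∑ m, messageValue p₀ u π m (g m) := by
  simp [V_eq_sum_messageValue, purePlan, Pi.single_apply, ite_mul]

def mixPlan [DecidableEq M] (c : (M → A) → ℝ) : M → A → ℝ := ∑ g, c g • purePlan g

theorem isPlan_mixPlan [DecidableEq M] {c : (M → A) → ℝ} (hc : c ∈ stdSimplex ℝ (M → A)) :
    IsPlan (mixPlan c) := by
  have h : ∀ m, mixPlan c m ∈ stdSimplex ℝ A := fun m => by
    simpa [mixPlan, purePlan] using (convex_stdSimplex ℝ A).sum_mem (fun g _ => hc.1 g) hc.2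
      fun g _ => single_mem_stdSimplex ℝ (g m)
  exact ⟨fun m => (h m).1, fun m => (h m).2⟩

theorem V_mixPlan [DecidableEq M] (π : Ω → M → ℝ) (c : (M → A) → ℝ) :
    V p₀ u π (mixPlan c) = ∑ g, c g * V p₀ u π (purePlan g) := by
  simp only [V_eq_sum_messageValue, mixPlan, Finset.sum_apply, Pi.smul_apply, smul_eq_mul,
    Finset.sum_mul, Finset.mul_sum, mul_assoc]
  conv_rhs => rw [Finset.sum_comm]
  exact Finset.sum_congr rfl fun _ _ => by rw [Finset.sum_comm]

end Payoff

section BestResponse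

variable {Ω M A : Type*} [Fintype Ω] [Fintype M] [Fintype A] [DecidableEq M] [DecidableEq A]
  [Nonempty A] (p₀ : Ω → ℝ) (u : A → Ω → ℝ)

def bestPureValue (π : Ω → M → ℝ) : ℝ :=
  Finset.univ.sup' Finset.univ_nonempty fun g : M → A => V p₀ u π (purePlan g)

theorem V_le_bestPureValue (π : Ω → M → ℝ) {f : M → A → ℝ} (hf : IsPlan f) :
    V p₀ u π f ≤ bestPureValue p₀ u π := by
  choose g hg using fun m =>
    Finset.exists_max_image Finset.univ (messageValue p₀ u π m) Finset.univ_nonempty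
  refine le_trans ?_ (Finset.le_sup' _ (Finset.mem_univ g))
  rw [V_eq_sum_messageValue, V_purePlan]
  refine Finset.sum_le_sum fun m _ => ?_
  calc ∑ a, f m a * messageValue p₀ u π m a ≤ ∑ a, f m a * messageValue p₀ u π m (g m) :=
        Finset.sum_le_sum fun a _ =>
          mul_le_mul_of_nonneg_left ((hg m).2 a (Finset.mem_univ a)) (hf.1 m a)
    _ = messageValue p₀ u π m (g m) := by rw [← Finset.sum_mul, hf.2 m, one_mul]

theorem continuous_bestPureValue : Continuous (bestPureValue (M := M) (A := A) p₀ u) :=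
  Continuous.finset_sup'_apply _ fun g _ => continuous_V p₀ u (purePlan g)

end BestResponse

theorem exists_mem_forall_V_le_of_forall_sInf_le {Ω M A : Type*} [Fintype Ω] [Fintype M]
    [Fintype A] [Nonempty A] (p₀ : Ω → ℝ) (u : A → Ω → ℝ) {P : Set (Ω → M → ℝ)}
    (hne : P.Nonempty) (hcpt : IsCompact P) (hcvx : Convex ℝ P) {f : M → A → ℝ}
    (hopt : ∀ f', IsPlan f' →
      sInf ((fun π => V p₀ u π f') '' P) ≤ sInf ((fun π => V p₀ u π f) '' P)) :
    ∃ π₁ ∈ P, ∀ f', IsPlan f' → V p₀ u π₁ f' ≤ V p₀ u π₁ f := by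
  classical
  obtain ⟨π₁, hπ₁, hmin⟩ :=
    hcpt.exists_isMinOn hne (continuous_bestPureValue (M := M) (A := A) p₀ u).continuousOn
  let Φ : (Ω → M → ℝ) →ₗ[ℝ] ((M → A) → ℝ) := LinearMap.pi fun g => VLinearMap p₀ u (purePlan g)
  obtain ⟨c, hc, hcΦ⟩ := exists_mem_stdSimplex_forall_le_sum_mul (hcvx.linear_image Φ)
    (hne.image Φ) (w := bestPureValue p₀ u π₁) (by
      rintro _ ⟨π, hπ, rfl⟩
      obtain ⟨g, -, hg⟩ := (Finset.le_sup'_iff _).1 (isMinOn_iff.1 hmin π hπ)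
      exact ⟨g, hg⟩)
  have hmix : bestPureValue p₀ u π₁ ≤ sInf ((fun π => V p₀ u π (mixPlan c)) '' P) :=
    le_csInf (hne.image _) (by
      rintro _ ⟨π, hπ, rfl⟩
      dsimp only
      rw [V_mixPlan]
      exact hcΦ _ ⟨π, hπ, rfl⟩)
  refine ⟨π₁, hπ₁, fun f' hf' => ?_⟩
  calc V p₀ u π₁ f' ≤ bestPureValue p₀ u π₁ := V_le_bestPureValue p₀ u π₁ hf'
    _ ≤ sInf ((fun π => V p₀ u π f) '' P) := hmix.trans (hopt _ (isPlan_mixPlan hc))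
    _ ≤ V p₀ u π₁ f := csInf_le (hcpt.image (continuous_V p₀ u f)).bddBelow ⟨π₁, hπ₁, rfl⟩

theorem stmt_3_general {Ω M A : Type*} [Fintype Ω] [Fintype M] [Fintype A]
    [Nonempty A]
    (p₀ : Ω → ℝ)
    (uR uS : A → Ω → ℝ)
    (BP AP : ℝ)
    (hBP : BP = sSup {v : ℝ | ∃ (π : Ω → M → ℝ) (f : M → A → ℝ), IsKernel π ∧ IsPlan f ∧
      (∀ f', IsPlan f' → V p₀ uR π f' ≤ V p₀ uR π f) ∧
      v = V p₀ uS π f})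
    (hAP : AP = sSup {v : ℝ | ∃ (AIS : Set (Ω → M → ℝ)) (f : M → A → ℝ),
      (∀ π ∈ AIS, IsKernel π) ∧ AIS.Nonempty ∧ IsCompact AIS ∧ Convex ℝ AIS ∧
      IsPlan f ∧
      (∀ f', IsPlan f' →
        sInf ((fun π => V p₀ uR π f') '' AIS) ≤ sInf ((fun π => V p₀ uR π f) '' AIS)) ∧
      v = sInf ((fun π => V p₀ uS π f) '' AIS)}) :
    AP = BP := by
  rw [hAP, hBP]
  apply csSup_eq_csSup_of_forall_exists_le
  · rintro _ ⟨P, f, hker, hne, hcpt, hcvx, hf, hopt, rfl⟩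
    obtain ⟨π₁, hπ₁, hbest⟩ := exists_mem_forall_V_le_of_forall_sInf_le p₀ uR hne hcpt hcvx hopt
    exact ⟨_, ⟨π₁, f, hker π₁ hπ₁, hf, hbest, rfl⟩,
      csInf_le (hcpt.image (continuous_V p₀ uS f)).bddBelow ⟨π₁, hπ₁, rfl⟩⟩
  · rintro _ ⟨π, f, hπ, hf, hbest, rfl⟩
    refine ⟨_, ⟨{π}, f, by simpa using hπ, Set.singleton_nonempty π, isCompact_singleton,
      convex_singleton π, hf, by simpa using hbest, rfl⟩, by simp⟩

/-- Theorem 1 of the paper: with an MEU sender and an MEU dynamically consistent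
receiver (sender-preferred tie-breaking), the sender's value from ambiguous
persuasion (`AP`) equals her value from Bayesian persuasion (`BP`). -/
theorem stmt_3 {Ω M A : Type*} [Fintype Ω] [Fintype M] [Fintype A]
    [Nonempty A]
    (p₀ : Ω → ℝ) (hp₀ : ∀ ω, 0 < p₀ ω) (hp₀1 : ∑ ω, p₀ ω = 1)
    (uR uS : A → Ω → ℝ)
    (BP AP : ℝ)
    (hBP : BP = sSup {v : ℝ | ∃ (π : Ω → M → ℝ) (f : M → A → ℝ), IsKernel π ∧ IsPlan f ∧
      (∀ f', IsPlan f' → V p₀ uR π f' ≤ V p₀ uR π f) ∧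
      v = V p₀ uS π f})
    (hAP : AP = sSup {v : ℝ | ∃ (AIS : Set (Ω → M → ℝ)) (f : M → A → ℝ),
      (∀ π ∈ AIS, IsKernel π) ∧ AIS.Nonempty ∧ IsCompact AIS ∧ Convex ℝ AIS ∧
      IsPlan f ∧
      (∀ f', IsPlan f' →
        sInf ((fun π => V p₀ uR π f') '' AIS) ≤ sInf ((fun π => V p₀ uR π f) '' AIS)) ∧
      v = sInf ((fun π => V p₀ uS π f) '' AIS)}) :
    AP = BP :=
  stmt_3_general p₀ uR uS BP AP hBP hAP
end

section
/- In the setting of Example 2 (Ω={0,1}, uniform prior, u_R as given), for ε ∈ (0, 1/4) let π_ε be the kernel inducing posteriors 1/4 - ε and 3/4 at messages m₁, m₂ (with message probabilities determined by Bayes plausibility: m₁ has probability 1/(2+4ε) when the second posterior is 3/4). Let Π = conv{π*, π_ε} and f* = the plan playing b at m₁ and c at m₂. Then f* maximizes min_{π∈Π} V_R(π,·) over all contingent plans. -/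
open Finset

/-- Example 2 receiver payoffs: actions `0 = a`, `1 = b`, `2 = c`; states
`false` = state 0, `true` = state 1. -/
noncomputable def uRex2 : Fin 3 → Bool → ℝ :=
  fun x ω =>
    if x = 0 then (if ω then -2 else 2)
    else if x = 1 then (if ω then -(1/2) else 3/2)
    else 0

/-- The kernel `π*` inducing posteriors 1/4 at `m₁ = false` and 3/4 at
`m₂ = true`, each message with unconditional probability 1/2. -/
noncomputable def πstarEx2 : Bool → Bool → ℝ :=
  fun ω m => if ω then (if m then 3/4 else 1/4) else (if m then 1/4 else 3/4)

/-- The kernel `π_ε` inducing posteriors `1/4 - ε` at `m₁ = false` (with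
unconditional probability `1/(2+4ε)`) and `3/4` at `m₂ = true`:
`π_ε(m₁|1) = (1/4-ε)/(1+2ε)`, `π_ε(m₁|0) = (3/4+ε)/(1+2ε)`. -/
noncomputable def πepsEx2 (ε : ℝ) : Bool → Bool → ℝ :=
  fun ω m =>
    if ω then (if m then 1 - (1/4 - ε) / (1 + 2*ε) else (1/4 - ε) / (1 + 2*ε))
    else (if m then 1 - (3/4 + ε) / (1 + 2*ε) else (3/4 + ε) / (1 + 2*ε))

/-- The plan `f*` playing `b` at `m₁ = false` and `c` at `m₂ = true`. -/
noncomputable def fstarEx2 : Bool → Fin 3 → ℝ :=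
  fun m x => if m then (if x = 2 then 1 else 0) else (if x = 1 then 1 else 0)


private lemma Vlin_ex2 (g : Bool → Fin 3 → ℝ) :
    IsLinearMap ℝ (fun π : Bool → Bool → ℝ => V (fun _ => (1/2:ℝ)) uRex2 π g) := by
  constructor
  · intro π π'
    simp [V, mul_add, add_mul, Finset.sum_add_distrib]
  · intro c π
    simp only [V, Pi.smul_apply, smul_eq_mul, Finset.mul_sum]
    refine Finset.sum_congr rfl fun m _ => Finset.sum_congr rfl fun a _ =>
      Finset.sum_congr rfl fun ω _ => by ring

/-- In Example 2, for `ε ∈ (0, 1/4)`, the plan `bc` remains ex-ante maxmin optimal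
under the ambiguous information structure `Π = conv{π*, π_ε}`. -/
theorem stmt_9 (p₀ : Bool → ℝ) (hp₀ : p₀ = fun _ => (1/2 : ℝ))
    (ε : ℝ) (hε0 : 0 < ε) (hε1 : ε < 1/4)
    (AIS : Set (Bool → Bool → ℝ))
    (hAIS : AIS = convexHull ℝ {πstarEx2, πepsEx2 ε}) :
    ∀ f : Bool → Fin 3 → ℝ, IsPlan f →
      sInf ((fun π => V p₀ uRex2 π f) '' AIS)
        ≤ sInf ((fun π => V p₀ uRex2 π fstarEx2) '' AIS) := by
  intro f hf
  subst hp₀ hAIS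
  have himg : ∀ g : Bool → Fin 3 → ℝ,
      (fun π => V (fun _ => (1/2:ℝ)) uRex2 π g) '' convexHull ℝ {πstarEx2, πepsEx2 ε}
        = segment ℝ (V (fun _ => (1/2:ℝ)) uRex2 πstarEx2 g)
            (V (fun _ => (1/2:ℝ)) uRex2 (πepsEx2 ε) g) := by
    intro g
    rw [(Vlin_ex2 g).image_convexHull, Set.image_pair, convexHull_pair]
  rw [himg f, himg fstarEx2, segment_eq_uIcc, segment_eq_uIcc, Set.uIcc, Set.uIcc,
    csInf_Icc min_le_max, csInf_Icc min_le_max]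
  have h1 : V (fun _ => (1/2:ℝ)) uRex2 πstarEx2 fstarEx2 = 1/2 := by
    simp [V, Fintype.sum_bool, Fin.sum_univ_three, uRex2, πstarEx2, fstarEx2]
    norm_num
  have h2 : V (fun _ => (1/2:ℝ)) uRex2 (πepsEx2 ε) fstarEx2 = 1/2 := by
    have h : (1 + 2*ε) ≠ 0 := by linarith
    simp [V, Fintype.sum_bool, Fin.sum_univ_three, uRex2, πepsEx2, fstarEx2]
    field_simp
    ring
  have h3 : V (fun _ => (1/2:ℝ)) uRex2 πstarEx2 f
      = f false 0 * (1/2) + f false 1 * (1/2) + f true 0 * (-(1/2)) := by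
    simp [V, Fintype.sum_bool, Fin.sum_univ_three, uRex2, πstarEx2]
    ring
  have hs : f false 0 + f false 1 + f false 2 = 1 := by
    have := hf.2 false; rwa [Fin.sum_univ_three] at this
  have hnn0 := hf.1 false 2
  have hnn1 := hf.1 true 0
  have h4 : V (fun _ => (1/2:ℝ)) uRex2 πstarEx2 f ≤ 1/2 := by
    rw [h3]; linarith
  calc min (V (fun _ => (1/2:ℝ)) uRex2 πstarEx2 f)
        (V (fun _ => (1/2:ℝ)) uRex2 (πepsEx2 ε) f)
      ≤ V (fun _ => (1/2:ℝ)) uRex2 πstarEx2 f := min_le_left _ _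
    _ ≤ 1/2 := h4
    _ = min (V (fun _ => (1/2:ℝ)) uRex2 πstarEx2 fstarEx2)
        (V (fun _ => (1/2:ℝ)) uRex2 (πepsEx2 ε) fstarEx2) := by rw [h1, h2]; norm_num
end

section
/- In the finite persuasion setting, suppose there exist a kernel π*, a contingent plan f* that maximizes V_R(π*,·), and a kernel π' such that V_R(π', f*) ≥ V_R(π*, f*) and V_S(π', f*) > V_S(π*, f*). Let Π = conv{π*, π'}. Then (i) f* maximizes min_{π∈Π} V_R(π,·) over all contingent plans, and (ii) for every α ∈ [0,1), α·min_{π∈Π} V_S(π,f*) + (1-α)·max_{π∈Π} V_S(π,f*) > V_S(π*, f*). -/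
open Finset

lemma V_linear {Ω M A : Type*} [Fintype Ω] [Fintype M] [Fintype A]
    (p₀ : Ω → ℝ) (u : A → Ω → ℝ) (f : M → A → ℝ) :
    IsLinearMap ℝ (fun π : Ω → M → ℝ => V p₀ u π f) := by
  constructor
  · intro x y
    simp [V, Pi.add_apply, mul_add, add_mul, Finset.sum_add_distrib]
  · intro c x
    simp [V, Finset.mul_sum, smul_eq_mul]
    congr 1; ext m; congr 1; ext a; congr 1; ext ω; ring

lemma image_hull {Ω M A : Type*} [Fintype Ω] [Fintype M] [Fintype A]
    (p₀ : Ω → ℝ) (u : A → Ω → ℝ) (f : M → A → ℝ) (x y : Ω → M → ℝ) :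
    (fun π => V p₀ u π f) '' (convexHull ℝ {x, y}) =
      Set.uIcc (V p₀ u x f) (V p₀ u y f) := by
  rw [(V_linear p₀ u f).image_convexHull, Set.image_pair, convexHull_pair,
    segment_eq_uIcc]

/-- The 'if' direction of Theorem 2 (ambiguity premium): if the Bayesian-persuasion
pair `(π*, f*)` is Pareto improvable by `π'` (receiver weakly better, sender
strictly better, holding `f*` fixed), then under `Π = conv{π*, π'}` the plan `f*`
is still maxmin optimal for the receiver, and the α-MEU sender with `α < 1`
strictly gains relative to `V_S(π*, f*)`. -/
theorem stmt_11 {Ω M A : Type*} [Fintype Ω] [Fintype M] [Fintype A]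
    (p₀ : Ω → ℝ) (hp₀ : ∀ ω, 0 < p₀ ω) (hp₀1 : ∑ ω, p₀ ω = 1)
    (uR uS : A → Ω → ℝ)
    (πstar π' : Ω → M → ℝ) (hπstar : IsKernel πstar) (hπ' : IsKernel π')
    (fstar : M → A → ℝ) (hfstar : IsPlan fstar)
    (hBR : ∀ f, IsPlan f → V p₀ uR πstar f ≤ V p₀ uR πstar fstar)
    (hRimp : V p₀ uR πstar fstar ≤ V p₀ uR π' fstar)
    (hSimp : V p₀ uS πstar fstar < V p₀ uS π' fstar)
    (AIS : Set (Ω → M → ℝ)) (hAIS : AIS = convexHull ℝ {πstar, π'}) :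
    (∀ f, IsPlan f →
      sInf ((fun π => V p₀ uR π f) '' AIS)
        ≤ sInf ((fun π => V p₀ uR π fstar) '' AIS)) ∧
    (∀ α : ℝ, 0 ≤ α → α < 1 →
      V p₀ uS πstar fstar <
        α * sInf ((fun π => V p₀ uS π fstar) '' AIS)
          + (1 - α) * sSup ((fun π => V p₀ uS π fstar) '' AIS)) := by
  subst hAIS
  have hR : ∀ f, (fun π => V p₀ uR π f) '' (convexHull ℝ {πstar, π'}) =
      Set.uIcc (V p₀ uR πstar f) (V p₀ uR π' f) := fun f => image_hull _ _ _ _ _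
  have hS : (fun π => V p₀ uS π fstar) '' (convexHull ℝ {πstar, π'}) =
      Set.uIcc (V p₀ uS πstar fstar) (V p₀ uS π' fstar) := image_hull _ _ _ _ _
  constructor
  · intro f hf
    rw [hR f, hR fstar, Set.uIcc, Set.uIcc, csInf_Icc (min_le_max), csInf_Icc (min_le_max)]
    have h1 := hBR f hf
    have h2 : min (V p₀ uR πstar fstar) (V p₀ uR π' fstar) = V p₀ uR πstar fstar :=
      min_eq_left hRimp
    rw [h2]
    exact le_trans (min_le_left _ _) h1
  · intro α hα0 hα1
    rw [hS, Set.uIcc, csInf_Icc (min_le_max), csSup_Icc (min_le_max),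
      min_eq_left hSimp.le, max_eq_right hSimp.le]
    nlinarith [hSimp]
end
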